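/- Let m, c, d be positive integers, k ∈ -2ℕ, and let q = e^{2πiτ} with Im(τ) < 0 (so |q| > 1). Then ζ_c^d q · φ⁺(c,d;τ) = -β⁺(0) - ∑_{n≥1} e(-nd/c) n^{(k-1)/2} J_{1-k}(4π√(mn)/c) q^{-n}, where φ⁺(c,d;τ) := (1/(2πi)) ∮_{|s|=r} α⁺_{m,c}(s) e^s / (1 - e^s ζ_c^d q) ds with r small enough that |e^{-s} q^{-1}| < 1 on |s| = r, α⁺_{m,c}(s) := ∑_{j≥0} β⁺(j)/s^{j+1}, and β⁺(j) := (2π√m/c)^{2j+1-k}/(j+1-k)!. -/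

import Mathlib

/-- The Bessel function of the first kind of integer order `α`. -/
noncomputable def besselJ (α : ℕ) (x : ℂ) : ℂ :=
  ∑' j : ℕ, ((-1) ^ j / ((Nat.factorial j : ℂ) * (Nat.factorial (j + α) : ℂ))) *
    (x / 2) ^ (2 * j + α)

open MeasureTheory Metric Set

/-!
On the circle `|s| = r` the hypothesis on `r` gives `|e^s ζ^d q| > 1`, so the kernel expands
uniformly as `1/(1 - w) = -∑_{n≥0} w^{-(n+1)}`, and integrating termwise gives
`ζ^d q φ⁺ = -∑_{n≥0} (ζ^d q)^{-n} S(n)` with `2πi S(n) = ∮ α⁺(s) e^{-ns} ds`.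
Integrating the series `α⁺` termwise as well, the residue of `s^{-(j+1)} e^{ws}` at `0` is
`w^j/j!`, so `S(n) = ∑_j β⁺(j) (-n)^j/j!`. This is `β⁺(0)` for `n = 0` and, comparing with the
power series of `J_{1-k}`, equals `n^{(k-1)/2} J_{1-k}(4π√(mn)/c)` for `n ≥ 1`.
-/

theorem hasSum_circleIntegral_of_norm_le {ι E : Type*} [Countable ι] [NormedAddCommGroup E]
    [NormedSpace ℂ E] {f : ι → ℂ → E} {g : ℂ → E} {c : ℂ} {R : ℝ} {u : ι → ℝ}
    (hf : ∀ n, ContinuousOn (f n) (sphere c |R|)) (hu : Summable u)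
    (hfu : ∀ n, ∀ z ∈ sphere c |R|, ‖f n z‖ ≤ u n)
    (hfg : ∀ z ∈ sphere c |R|, HasSum (fun n ↦ f n z) (g z)) :
    HasSum (fun n ↦ ∮ z in C(c, R), f n z) (∮ z in C(c, R), g z) := by
  refine intervalIntegral.hasSum_integral_of_dominated_convergence (fun n _ ↦ |R| * u n)
    (fun n ↦ ?_) (fun n ↦ ?_) ?_ ?_ ?_
  · have hfn : Continuous fun θ ↦ f n (circleMap c R θ) :=
      (hf n).comp_continuous (continuous_circleMap c R) (circleMap_mem_sphere' c R)
    simp only [deriv_circleMap]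
    exact ((by fun_prop : Continuous fun θ ↦ circleMap 0 R θ * Complex.I).smul
      hfn).aestronglyMeasurable
  · refine Filter.Eventually.of_forall fun θ _ ↦ ?_
    rw [norm_smul, deriv_circleMap, norm_mul, norm_circleMap_zero, Complex.norm_I, mul_one]
    exact mul_le_mul_of_nonneg_left (hfu n _ (circleMap_mem_sphere' c R θ)) (abs_nonneg R)
  · exact Filter.Eventually.of_forall fun _ _ ↦ hu.mul_left |R|
  · exact intervalIntegrable_const
  · exact Filter.Eventually.of_forall fun θ _ ↦
      (hfg _ (circleMap_mem_sphere' c R θ)).const_smul _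

theorem circleIntegral_one_div_pow_succ_mul_exp {r : ℝ} (hr : 0 < r) (w : ℂ) (j : ℕ) :
    ∮ z in C(0, r), 1 / z ^ (j + 1) * Complex.exp (w * z)
      = 2 * Real.pi * Complex.I * (w ^ j / j.factorial) := by
  have hexp : Differentiable ℂ fun z ↦ Complex.exp (w * z) := by fun_prop
  have := hexp.differentiableOn.circleIntegral_one_div_sub_center_pow_smul (c := 0) hr j
  simp only [sub_zero, smul_eq_mul, iteratedDeriv_cexp_const_mul, mul_zero,
    Complex.exp_zero, mul_one] at this
  rw [this]
  ring

theorem hasSum_neg_inv_pow_succ {𝕜 : Type*} [NormedField 𝕜] [CompleteSpace 𝕜] {w : 𝕜}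
    (hw : 1 < ‖w‖) : HasSum (fun n : ℕ ↦ -w⁻¹ ^ (n + 1)) (1 - w)⁻¹ := by
  have hw0 : w ≠ 0 := norm_pos_iff.1 (one_pos.trans hw)
  have h1 : ‖w⁻¹‖ < 1 := by rw [norm_inv]; exact inv_lt_one_of_one_lt₀ hw
  have h := (hasSum_geometric_of_norm_lt_one h1).mul_left w⁻¹
  simp_rw [← pow_succ'] at h
  rw [← mul_inv, mul_sub, mul_inv_cancel₀ hw0, mul_one, ← neg_sub, inv_neg] at h
  simpa using h.neg

theorem hasSum_circleIntegral_mul_exp_div_one_sub {α : ℂ → ℂ} {r M : ℝ} {Z : ℂ} (hr : 0 ≤ r)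
    (hα : ContinuousOn α (sphere 0 r)) (hαM : ∀ z ∈ sphere 0 r, ‖α z‖ ≤ M)
    (hZ : Real.exp r < ‖Z‖) :
    HasSum (fun n : ℕ ↦ -Z⁻¹ ^ (n + 1) * ∮ z in C(0, r), α z * Complex.exp (-n * z))
      (∮ z in C(0, r), α z * Complex.exp z / (1 - Complex.exp z * Z)) := by
  have hδ : Real.exp r * ‖Z⁻¹‖ < 1 := by
    rw [norm_inv, ← div_eq_mul_inv]
    exact (div_lt_one ((Real.exp_pos r).trans hZ)).2 hZ
  have hexp : ∀ (n : ℕ) (z : ℂ), Complex.exp (-n * z) = Complex.exp (-z) ^ n := fun n z ↦ by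
    rw [← Complex.exp_nat_mul]
    ring_nf
  have hre : ∀ z ∈ sphere (0 : ℂ) r, |z.re| ≤ r := fun z hz ↦
    (Complex.abs_re_le_norm z).trans (mem_sphere_zero_iff_norm.1 hz).le
  simp_rw [← circleIntegral.integral_const_mul]
  refine hasSum_circleIntegral_of_norm_le
    ?_ ((summable_geometric_of_lt_one (by positivity) hδ).mul_left (M * ‖Z⁻¹‖)) ?_ ?_ <;>
    rw [abs_of_nonneg hr]
  · exact fun n ↦ continuousOn_const.mul (hα.mul (by fun_prop))
  · intro n z hz
    have : ‖Complex.exp (-z)‖ ≤ Real.exp r := by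
      rw [Complex.norm_exp, Complex.neg_re, Real.exp_le_exp]
      linarith [abs_le.1 (hre z hz)]
    have hM : 0 ≤ M := (norm_nonneg _).trans (hαM z hz)
    calc ‖-Z⁻¹ ^ (n + 1) * (α z * Complex.exp (-n * z))‖
        = ‖Z⁻¹‖ ^ (n + 1) * (‖α z‖ * ‖Complex.exp (-z)‖ ^ n) := by
          rw [hexp, norm_mul, norm_mul, norm_neg, norm_pow, norm_pow]
      _ ≤ ‖Z⁻¹‖ ^ (n + 1) * (M * Real.exp r ^ n) := by gcongr; exact hαM z hz
      _ = M * ‖Z⁻¹‖ * (Real.exp r * ‖Z⁻¹‖) ^ n := by ring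
  · intro z hz
    have hw : 1 < ‖Complex.exp z * Z‖ := by
      calc 1 = Real.exp (-r) * Real.exp r := by rw [← Real.exp_add, neg_add_cancel, Real.exp_zero]
        _ < Real.exp (-r) * ‖Z‖ := by gcongr
        _ ≤ ‖Complex.exp z * Z‖ := by
          rw [norm_mul, Complex.norm_exp]
          gcongr
          linarith [abs_le.1 (hre z hz)]
    have hterm : ∀ n : ℕ, α z * Complex.exp z * -(Complex.exp z * Z)⁻¹ ^ (n + 1)
        = -Z⁻¹ ^ (n + 1) * (α z * Complex.exp (-n * z)) := fun n ↦ by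
      rw [hexp, mul_inv, ← Complex.exp_neg, mul_pow, pow_succ (Complex.exp (-z))]
      have h1 : Complex.exp z * Complex.exp (-z) = 1 := by
        rw [← Complex.exp_add, add_neg_cancel, Complex.exp_zero]
      linear_combination -(α z * Z⁻¹ ^ (n + 1) * Complex.exp (-z) ^ n) * h1
    have h := (hasSum_neg_inv_pow_succ hw).mul_left (α z * Complex.exp z)
    simp_rw [hterm, ← div_eq_mul_inv] at h
    exact h

section InverseSeries

variable {b : ℕ → ℂ} {r : ℝ}

lemma norm_div_pow_of_mem_sphere {z : ℂ} (hz : z ∈ sphere (0 : ℂ) r) (x : ℂ) (j : ℕ) :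
    ‖x / z ^ j‖ = ‖x‖ / r ^ j := by
  rw [norm_div, norm_pow, mem_sphere_zero_iff_norm.1 hz]

lemma continuousOn_div_pow_sphere (hr : r ≠ 0) (x : ℂ) (j : ℕ) :
    ContinuousOn (fun z ↦ x / z ^ j) (sphere 0 r) :=
  continuousOn_const.div (continuousOn_pow _)
    fun z hz ↦ pow_ne_zero _ (ne_zero_of_mem_sphere hr ⟨z, hz⟩)

lemma continuousOn_tsum_div_pow_succ (hr : 0 < r) (hb : Summable fun j ↦ ‖b j‖ / r ^ (j + 1)) :
    ContinuousOn (fun z ↦ ∑' j, b j / z ^ (j + 1)) (sphere 0 r) :=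
  continuousOn_tsum (fun _ ↦ continuousOn_div_pow_sphere hr.ne' _ _) hb
    fun _ _ hz ↦ (norm_div_pow_of_mem_sphere hz _ _).le

lemma norm_tsum_div_pow_succ_le (hb : Summable fun j ↦ ‖b j‖ / r ^ (j + 1)) {z : ℂ}
    (hz : z ∈ sphere 0 r) :
    ‖∑' j, b j / z ^ (j + 1)‖ ≤ ∑' j, ‖b j‖ / r ^ (j + 1) :=
  tsum_of_norm_bounded hb.hasSum fun _ ↦ (norm_div_pow_of_mem_sphere hz _ _).le

theorem hasSum_circleIntegral_tsum_div_pow_succ_mul_exp (hr : 0 < r)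
    (hb : Summable fun j ↦ ‖b j‖ / r ^ (j + 1)) (w : ℂ) :
    HasSum (fun j ↦ 2 * Real.pi * Complex.I * (b j * (w ^ j / j.factorial)))
      (∮ z in C(0, r), (∑' j, b j / z ^ (j + 1)) * Complex.exp (w * z)) := by
  have hterm : ∀ j, ∮ z in C(0, r), b j / z ^ (j + 1) * Complex.exp (w * z)
      = 2 * Real.pi * Complex.I * (b j * (w ^ j / j.factorial)) := fun j ↦ by
    simp_rw [div_eq_mul_one_div (b j), mul_assoc, circleIntegral.integral_const_mul,
      circleIntegral_one_div_pow_succ_mul_exp hr]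
    ring
  simp_rw [← hterm]
  refine hasSum_circleIntegral_of_norm_le
    (u := fun j ↦ ‖b j‖ / r ^ (j + 1) * Real.exp (‖w‖ * r)) ?_ (hb.mul_right _) ?_ ?_ <;>
    rw [abs_of_pos hr]
  · exact fun j ↦ (continuousOn_div_pow_sphere hr.ne' _ _).mul (by fun_prop)
  · intro j z hz
    rw [norm_mul, norm_div_pow_of_mem_sphere hz, Complex.norm_exp]
    gcongr
    calc (w * z).re ≤ ‖w * z‖ := Complex.re_le_norm _
      _ = ‖w‖ * r := by rw [norm_mul, mem_sphere_zero_iff_norm.1 hz]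
  · intro z hz
    exact (hb.of_norm_bounded fun _ ↦ (norm_div_pow_of_mem_sphere hz _ _).le).hasSum.mul_right _

theorem hasSum_inv_pow_mul_tsum_mul_neg_pow_div_factorial {Z : ℂ} (hr : 0 < r)
    (hb : Summable fun j ↦ ‖b j‖ / r ^ (j + 1)) (hZ : Real.exp r < ‖Z‖) :
    HasSum (fun n : ℕ ↦ Z⁻¹ ^ n * ∑' j, b j * ((-(n : ℂ)) ^ j / j.factorial))
      (-(Z * (1 / (2 * Real.pi * Complex.I) * ∮ z in C(0, r),
        (∑' j, b j / z ^ (j + 1)) * Complex.exp z / (1 - Complex.exp z * Z)))) := by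
  have hZ0 : Z ≠ 0 := norm_pos_iff.1 ((Real.exp_pos r).trans hZ)
  have h := (hasSum_circleIntegral_mul_exp_div_one_sub hr.le
    (continuousOn_tsum_div_pow_succ hr hb) (fun z hz ↦ norm_tsum_div_pow_succ_le hb hz) hZ).mul_left
    (-(Z / (2 * Real.pi * Complex.I)))
  simp_rw [← (hasSum_circleIntegral_tsum_div_pow_succ_mul_exp hr hb _).tsum_eq, tsum_mul_left] at h
  rw [show ∀ x : ℂ, -(Z / (2 * Real.pi * Complex.I)) * x
      = -(Z * (1 / (2 * Real.pi * Complex.I) * x)) from fun x ↦ by ring] at h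
  exact h.congr_fun fun n ↦ by rw [pow_succ]; field_simp

end InverseSeries

theorem besselJ_two_mul_mul (K : ℕ) (A x : ℂ) :
    besselJ K (2 * A * x) =
      x ^ K * ∑' j : ℕ, A ^ (2 * j + K) / (j + K).factorial * ((-x ^ 2) ^ j / j.factorial) := by
  rw [besselJ, ← tsum_mul_left]
  refine tsum_congr fun j ↦ ?_
  rw [neg_pow, one_pow]
  ring

theorem tsum_pow_div_factorial_mul_eq_cpow_mul_besselJ (K : ℕ) (A : ℝ) {t : ℝ} (ht : 0 < t) :
    ∑' j : ℕ, ((A ^ (2 * j + K) / (j + K).factorial : ℝ) : ℂ) * ((-(t : ℂ)) ^ j / j.factorial)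
      = (t : ℂ) ^ (-(K : ℂ) / 2) * besselJ K ((2 * A * Real.sqrt t : ℝ) : ℂ) := by
  have hsqrt : ((Real.sqrt t : ℝ) : ℂ) ^ 2 = t := by
    rw [← Complex.ofReal_pow, Real.sq_sqrt ht.le]
  have hcancel : (t : ℂ) ^ (-(K : ℂ) / 2) * ((Real.sqrt t : ℝ) : ℂ) ^ K = 1 := by
    rw [Real.sqrt_eq_rpow, Complex.ofReal_cpow ht.le, ← Complex.cpow_natCast,
      ← Complex.cpow_mul, ← Complex.cpow_add _ _ (by exact_mod_cast ht.ne')]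
    · rw [show -(K : ℂ) / 2 + ((1 / 2 : ℝ) : ℂ) * K = 0 by push_cast; ring, Complex.cpow_zero]
    all_goals simp [← Complex.ofReal_log ht.le, Real.pi_pos, Real.pi_nonneg]
  push_cast
  rw [besselJ_two_mul_mul, hsqrt, ← mul_assoc, hcancel, one_mul]

theorem tsum_mul_neg_pow_div_factorial_eq_cpow_mul_besselJ (k : ℤ) (hk : k ≤ 1) (m c n : ℕ) :
    ∑' j : ℕ, (((2 * Real.pi * Real.sqrt m / c) ^ (2 * j + (1 - k).toNat) /
        (j + (1 - k).toNat).factorial : ℝ) : ℂ) * ((-((n + 1 : ℕ) : ℂ)) ^ j / j.factorial)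
      = ((n : ℂ) + 1) ^ (((k : ℂ) - 1) / 2) *
        besselJ (1 - k).toNat ((4 * Real.pi * Real.sqrt (m * (n + 1)) / c : ℝ) : ℂ) := by
  have hK : (((1 - k).toNat : ℕ) : ℂ) = 1 - k := by exact_mod_cast Int.toNat_of_nonneg (by omega)
  have harg : 4 * Real.pi * Real.sqrt (m * (n + 1)) / c
      = 2 * (2 * Real.pi * Real.sqrt m / c) * Real.sqrt (n + 1) := by
    rw [Real.sqrt_mul (Nat.cast_nonneg m)]
    ring
  have h := tsum_pow_div_factorial_mul_eq_cpow_mul_besselJ (1 - k).toNat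
    (2 * Real.pi * Real.sqrt m / c) (t := n + 1) (by positivity)
  rw [hK, show -(1 - (k : ℂ)) / 2 = ((k : ℂ) - 1) / 2 by ring, ← harg] at h
  push_cast at h ⊢
  exact h

theorem summable_pow_div_factorial_add_div_pow {A r : ℝ} (hA : 0 ≤ A) (hr : 0 < r) (K : ℕ) :
    Summable fun j : ℕ ↦ A ^ (2 * j + K) / (j + K).factorial / r ^ (j + 1) := by
  refine Summable.of_nonneg_of_le (fun j ↦ by positivity) (fun j ↦ ?_)
    ((Real.summable_pow_div_factorial (A ^ 2 / r)).mul_left (A ^ K / r))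
  calc A ^ (2 * j + K) / (j + K).factorial / r ^ (j + 1)
      ≤ A ^ (2 * j + K) / j.factorial / r ^ (j + 1) := by
        gcongr
        exact Nat.le_add_right j K
    _ = A ^ K / r * ((A ^ 2 / r) ^ j / j.factorial) := by
        rw [pow_add, pow_mul, div_pow, pow_succ]
        field_simp
        ring

theorem norm_cexp_two_pi_I_div_natCast (c : ℕ) :
    ‖Complex.exp (2 * Real.pi * Complex.I / c)‖ = 1 := by
  rw [show 2 * Real.pi * Complex.I / c = ((2 * Real.pi / c : ℝ) : ℂ) * Complex.I by
    push_cast; ring]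
  exact Complex.norm_exp_ofReal_mul_I _

theorem exp_lt_norm_of_norm_exp_neg_mul_inv_lt_one {q : ℂ} {r : ℝ} (hq : q ≠ 0) (hr : 0 ≤ r)
    (h : ∀ s : ℂ, ‖s‖ = r → ‖Complex.exp (-s) * q⁻¹‖ < 1) : Real.exp r < ‖q‖ := by
  have hr' := h (-r) (by simp [abs_of_nonneg hr])
  rw [neg_neg, norm_mul, norm_inv, ← Complex.ofReal_exp, Complex.norm_real,
    Real.norm_of_nonneg (Real.exp_pos r).le, ← div_eq_mul_inv] at hr'
  exact (div_lt_one (norm_pos_iff.2 hq)).1 hr'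

theorem cexp_mul_zpow_neg_succ (c d n : ℕ) (q : ℂ) :
    Complex.exp (2 * Real.pi * Complex.I * (-(((n : ℂ) + 1) * d) / c)) * q ^ (-((n : ℤ) + 1))
      = ((Complex.exp (2 * Real.pi * Complex.I / c)) ^ d * q)⁻¹ ^ (n + 1) := by
  rw [zpow_neg, ← inv_zpow, show (n : ℤ) + 1 = ((n + 1 : ℕ) : ℤ) by push_cast; ring, zpow_natCast,
    mul_inv, mul_pow, ← Complex.exp_nat_mul, ← Complex.exp_neg, ← Complex.exp_nat_mul]
  congr 2
  push_cast
  ring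

theorem phiPlus_lower_half_plane_general (k : ℤ) (hk : k < 0)
    (m c d : ℕ) (τ : ℂ)
    (r : ℝ) (hr : 0 < r)
    (hsmall : ∀ s : ℂ, ‖s‖ = r →
      ‖Complex.exp (-s) * (Complex.exp (2 * Real.pi * Complex.I * τ))⁻¹‖ < 1) :
    let q : ℂ := Complex.exp (2 * Real.pi * Complex.I * τ)
    let ζ : ℂ := Complex.exp (2 * Real.pi * Complex.I / c)
    let β : ℕ → ℝ := fun j =>
      (2 * Real.pi * Real.sqrt m / c) ^ (2 * j + (1 - k).toNat) /
        (Nat.factorial (j + (1 - k).toNat))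
    let α : ℂ → ℂ := fun s => ∑' j : ℕ, ((β j : ℝ) : ℂ) / s ^ (j + 1)
    let φ : ℂ := (1 / (2 * Real.pi * Complex.I)) *
      ∮ s in C(0, r), α s * Complex.exp s / (1 - Complex.exp s * ζ ^ d * q)
    HasSum
      (fun n : ℕ =>
        Complex.exp (2 * Real.pi * Complex.I * (-(((n : ℂ) + 1) * d) / c)) *
          ((n : ℂ) + 1) ^ (((k : ℂ) - 1) / 2) *
          besselJ (1 - k).toNat ((4 * Real.pi * Real.sqrt (m * (n + 1)) / c : ℝ) : ℂ) *
          q ^ (-((n : ℤ) + 1)))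
      (-(β 0 : ℂ) - ζ ^ d * q * φ) := by
  intro q ζ β α φ
  have hZ : Real.exp r < ‖ζ ^ d * q‖ := by
    rw [norm_mul, norm_pow, norm_cexp_two_pi_I_div_natCast, one_pow, one_mul]
    exact exp_lt_norm_of_norm_exp_neg_mul_inv_lt_one (Complex.exp_ne_zero _) hr.le hsmall
  have hβ : Summable fun j ↦ ‖((β j : ℝ) : ℂ)‖ / r ^ (j + 1) :=
    (summable_pow_div_factorial_add_div_pow
      (A := 2 * Real.pi * Real.sqrt m / c) (by positivity) hr _).congr fun j ↦ by
      rw [Complex.norm_real, Real.norm_of_nonneg (by positivity)]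
  have hexpand := hasSum_inv_pow_mul_tsum_mul_neg_pow_div_factorial hr hβ hZ
  simp only [← mul_assoc (Complex.exp _)] at hexpand
  have hS0 : ∑' j, (β j : ℂ) * ((-((0 : ℕ) : ℂ)) ^ j / j.factorial) = β 0 := by
    rw [tsum_eq_single 0 fun j hj ↦ by simp [zero_pow hj]]
    simp
  have hshift := (hasSum_nat_add_iff' 1).2 hexpand
  rw [Finset.sum_range_one, pow_zero, one_mul, hS0, neg_sub_comm] at hshift
  refine hshift.congr_fun fun n ↦ ?_
  rw [← cexp_mul_zpow_neg_succ, tsum_mul_neg_pow_div_factorial_eq_cpow_mul_besselJ k (by omega)]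
  ring

/-- Let `k ∈ -2ℕ`, `m, c, d ≥ 1` and `q = e^{2πiτ}` with `Im τ < 0`. With
`β⁺(j) = (2π√m/c)^{2j+1-k}/(j+1-k)!`, `α⁺(s) = ∑_j β⁺(j)/s^{j+1}`, and
`φ⁺ = (1/(2πi)) ∮_{|s|=r} α⁺(s) e^s/(1 - e^s ζ_c^d q) ds` (with `r` so small
that `|e^{-s} q^{-1}| < 1` on `|s| = r`), we have
`ζ_c^d q φ⁺ = -β⁺(0) - ∑_{n≥1} e(-nd/c) n^{(k-1)/2} J_{1-k}(4π√(mn)/c) q^{-n}`. -/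
theorem phiPlus_lower_half_plane (k : ℤ) (hk : k < 0) (hke : Even k)
    (m c d : ℕ) (hm : 1 ≤ m) (hc : 1 ≤ c) (hd : 1 ≤ d) (τ : ℂ) (hτ : τ.im < 0)
    (r : ℝ) (hr : 0 < r)
    (hsmall : ∀ s : ℂ, ‖s‖ = r →
      ‖Complex.exp (-s) * (Complex.exp (2 * Real.pi * Complex.I * τ))⁻¹‖ < 1) :
    let q : ℂ := Complex.exp (2 * Real.pi * Complex.I * τ)
    let ζ : ℂ := Complex.exp (2 * Real.pi * Complex.I / c)
    let β : ℕ → ℝ := fun j =>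
      (2 * Real.pi * Real.sqrt m / c) ^ (2 * j + (1 - k).toNat) /
        (Nat.factorial (j + (1 - k).toNat))
    let α : ℂ → ℂ := fun s => ∑' j : ℕ, ((β j : ℝ) : ℂ) / s ^ (j + 1)
    let φ : ℂ := (1 / (2 * Real.pi * Complex.I)) *
      ∮ s in C(0, r), α s * Complex.exp s / (1 - Complex.exp s * ζ ^ d * q)
    HasSum
      (fun n : ℕ =>
        Complex.exp (2 * Real.pi * Complex.I * (-(((n : ℂ) + 1) * d) / c)) *
          ((n : ℂ) + 1) ^ (((k : ℂ) - 1) / 2) *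
          besselJ (1 - k).toNat ((4 * Real.pi * Real.sqrt (m * (n + 1)) / c : ℝ) : ℂ) *
          q ^ (-((n : ℤ) + 1)))
      (-(β 0 : ℂ) - ζ ^ d * q * φ) :=
  phiPlus_lower_half_plane_general k hk m c d τ r hr hsmall
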